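/- Let 𝒜 be a skeletally small abelian category, X an object of 𝒜, and Δ a bicomplete subobject chain of X. Then: (1) if Y ∈ Δ and Y ≠ Y⁻_Δ, then (Y⁻_Δ)⁺_Δ = Y; (2) if Y ∈ Δ and Y ≠ Y⁺_Δ, then (Y⁺_Δ)⁻_Δ = Y; (3) there is an equality of multisets sf⁻(Δ) = sf⁺(Δ). -/

import Mathlib

/-!
The colimit (limit) of a set of subobjects, when it is a subobject, is its supremum (infimum)
in the subobject lattice. In a chain, no member lies strictly between `Y⁻` and `Y`, so `Y` is
the least member above `Y⁻`, i.e. `(Y⁻)⁺ = Y`; dually `(Y⁺)⁻ = Y`. Hence `Y ↦ Y⁻` is a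
bijection from the index set of `sf⁻(Δ)` onto that of `sf⁺(Δ)` under which the subfactors
`Y/Y⁻` and `(Y⁻)⁺/Y⁻` are literally the same object.
-/

open CategoryTheory CategoryTheory.Limits

universe w v u

namespace JHS

variable {𝒜 : Type u} [Category.{v} 𝒜] [Abelian 𝒜]

variable {X : 𝒜}

/-- The diagram in `𝒜` associated to a set of subobjects of `X`, given by the underlying
objects and the canonical inclusion monomorphisms between them. -/
@[simps]
noncomputable def chainDiagram (Δ : Set (Subobject X)) : Δ ⥤ 𝒜 where
  obj Y := (Y.1 : 𝒜)
  map {Y Z} f := Subobject.ofLE Y.1 Z.1 (leOfHom f)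
  map_id Y := Subobject.ofLE_refl Y.1
  map_comp {Y Z W} f g := (Subobject.ofLE_comp_ofLE Y.1 Z.1 W.1 (leOfHom f) (leOfHom g)).symm

/-- The cocone over the diagram of a set of subobjects of `X` with vertex an upper bound. -/
@[simps]
noncomputable def chainCocone (Δ : Set (Subobject X)) (W : Subobject X) (h : ∀ Y ∈ Δ, Y ≤ W) :
    Cocone (chainDiagram Δ) where
  pt := (W : 𝒜)
  ι :=
    { app := fun Y => Subobject.ofLE Y.1 W (h Y.1 Y.2)
      naturality := fun Y Z f => by
        simp [chainDiagram, Subobject.ofLE_comp_ofLE] }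

/-- The cone over the diagram of a set of subobjects of `X` with vertex a lower bound. -/
@[simps]
noncomputable def chainCone (Δ : Set (Subobject X)) (W : Subobject X) (h : ∀ Y ∈ Δ, W ≤ Y) :
    Cone (chainDiagram Δ) where
  pt := (W : 𝒜)
  π :=
    { app := fun Y => Subobject.ofLE W Y.1 (h Y.1 Y.2)
      naturality := fun Y Z f => by
        simp [chainDiagram, Subobject.ofLE_comp_ofLE] }

/-- `W` is the colimit of the chain `Δ` of subobjects of `X`, as a subobject of `X`:
the colimit of the diagram of inclusions exists and the induced morphism to `X` is a
monomorphism with image `W`.  Equivalently, the canonical cocone with vertex `W` is a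
colimit cocone. -/
def IsColimSub (Δ : Set (Subobject X)) (W : Subobject X) : Prop :=
  ∃ h : ∀ Y ∈ Δ, Y ≤ W, Nonempty (IsColimit (chainCocone Δ W h))

/-- `W` is the limit of the chain `Δ` of subobjects of `X` (such a limit is automatically a
subobject of `X`): the canonical cone with vertex `W` is a limit cone. -/
def IsLimSub (Δ : Set (Subobject X)) (W : Subobject X) : Prop :=
  ∃ h : ∀ Y ∈ Δ, W ≤ Y, Nonempty (IsLimit (chainCone Δ W h))

/-- A pre-subobject chain: a set of subobjects totally ordered under inclusion. -/
def IsPreChain (Δ : Set (Subobject X)) : Prop :=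
  IsChain (· ≤ ·) Δ

/-- A subobject chain: a pre-subobject chain containing `⊥ = 0` and `⊤ = X`. -/
def IsSubChain (Δ : Set (Subobject X)) : Prop :=
  IsPreChain Δ ∧ ⊥ ∈ Δ ∧ ⊤ ∈ Δ

/-- A chain is cocomplete if every subset has a colimit which is a subobject of `X` and
lies in the chain. -/
def Cocomplete (Δ : Set (Subobject X)) : Prop :=
  ∀ Δ' ⊆ Δ, ∃ W ∈ Δ, IsColimSub Δ' W

/-- A chain is complete if every subset has a limit which lies in the chain. -/
def Complete (Δ : Set (Subobject X)) : Prop :=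
  ∀ Δ' ⊆ Δ, ∃ W ∈ Δ, IsLimSub Δ' W

/-- A chain is bicomplete if it is both cocomplete and complete. -/
def Bicomplete (Δ : Set (Subobject X)) : Prop :=
  Cocomplete Δ ∧ Complete Δ

/-- `W = Y⁻_Δ` is the predecessor of `Y` in `Δ`: the colimit of `{Z ∈ Δ | Z ⊊ Y}`,
with the convention `0⁻_Δ = 0`. -/
def IsPred (Δ : Set (Subobject X)) (Y W : Subobject X) : Prop :=
  (Y = ⊥ ∧ W = ⊥) ∨ (Y ≠ ⊥ ∧ IsColimSub {Z | Z ∈ Δ ∧ Z < Y} W)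

/-- `W = Y⁺_Δ` is the successor of `Y` in `Δ`: the limit of `{Z ∈ Δ | Y ⊊ Z}`,
with the convention `X⁺_Δ = X`. -/
def IsSucc (Δ : Set (Subobject X)) (Y W : Subobject X) : Prop :=
  (Y = ⊤ ∧ W = ⊤) ∨ (Y ≠ ⊤ ∧ IsLimSub {Z | Z ∈ Δ ∧ Y < Z} W)

/-- The quotient (subfactor) `Y/W` of two nested subobjects of `X`: the cokernel of the
inclusion `W → Y`. -/
noncomputable def quot (W Y : Subobject X) (h : W ≤ Y) : 𝒜 :=
  cokernel (Subobject.ofLE W Y h)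

/-- A composition series of `X`: a bicomplete subobject chain all of whose subfactors
`Y/Y⁻_Δ` (for `Y ∈ Δ` with `Y ≠ Y⁻_Δ`) are simple. -/
def IsCompSeries (Δ : Set (Subobject X)) : Prop :=
  IsSubChain Δ ∧ Bicomplete Δ ∧
    ∀ Y ∈ Δ, ∀ (W) (h : W ≤ Y), IsPred Δ Y W → W ≠ Y → Simple (quot W Y h)

variable (X) in
/-- Axiom (JHS1): `X` is subobject cocomplete. -/
def JHS1 : Prop :=
  ∀ Δ : Set (Subobject X), IsPreChain Δ → ∃ W, IsColimSub Δ W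

variable (X) in
/-- Axiom (JHS2): `X` is subobject complete. -/
def JHS2 : Prop :=
  ∀ Δ : Set (Subobject X), IsPreChain Δ → ∃ W, IsLimSub Δ W

variable (X) in
/-- Axiom (JHS3). -/
def JHS3 : Prop :=
  JHS1 X ∧ ∀ (Δ : Set (Subobject X)) (Z W : Subobject X),
    IsPreChain Δ → IsColimSub Δ W → IsColimSub ((· ⊓ Z) '' Δ) (W ⊓ Z)

variable (X) in
/-- Axiom (JHS4). -/
def JHS4 : Prop :=
  JHS2 X ∧ ∀ (Δ : Set (Subobject X)) (Z W : Subobject X),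
    IsPreChain Δ → IsLimSub Δ W → IsLimSub ((· ⊔ Z) '' Δ) (W ⊔ Z)

variable (X) in
/-- `X` is weakly Jordan–Hölder–Schreier. -/
def WeaklyJHS : Prop :=
  JHS3 X ∧ JHS4 X

variable (X) in
/-- Axiom (JHS5): if `X ≠ 0`, every composition series of `X` has a nonempty subfactor
multiset. -/
def JHS5 : Prop :=
  ¬ IsZero X → ∀ Δ : Set (Subobject X), IsCompSeries Δ →
    ∃ Y ∈ Δ, ∃ W, IsPred Δ Y W ∧ W ≠ Y

variable (X) in
/-- `X` is Jordan–Hölder–Schreier. -/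
def IsJHS : Prop :=
  WeaklyJHS X ∧ JHS5 X

/-- The index set of the lower subfactor multiset `sf⁻(Δ)`: elements `Y ∈ Δ` admitting a
predecessor `Y⁻_Δ ≠ Y`. -/
def lowerIdx (Δ : Set (Subobject X)) : Type _ :=
  {Y : Subobject X // Y ∈ Δ ∧ ∃ W, IsPred Δ Y W ∧ W ≠ Y}

/-- The index set of the upper subfactor multiset `sf⁺(Δ)`: elements `Y ∈ Δ` admitting a
successor `Y⁺_Δ ≠ Y`. -/
def upperIdx (Δ : Set (Subobject X)) : Type _ :=
  {Y : Subobject X // Y ∈ Δ ∧ ∃ W, IsSucc Δ Y W ∧ W ≠ Y}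

/-- Subfactor equivalence of two chains: a bijection of the index sets of their subfactor
multisets under which corresponding subfactors are isomorphic. -/
def SubfactorEquiv (Δ Γ : Set (Subobject X)) : Prop :=
  ∃ e : lowerIdx Δ ≃ lowerIdx Γ,
    ∀ (Y : lowerIdx Δ) (W : Subobject X) (hW : W ≤ Y.1) (V : Subobject X)
      (hV : V ≤ (e Y).1),
      IsPred Δ Y.1 W → IsPred Γ (e Y).1 V →
      Nonempty (quot W Y.1 hW ≅ quot V (e Y).1 hV)

/-- The lower conflation `con⁻(Δ, Γ)`. -/
def conLower (Δ Γ : Set (Subobject X)) : Set (Subobject X) :=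
  Δ ∪ {V | ∃ Y ∈ Δ, ∃ Z ∈ Γ, ∃ W, IsPred Δ Y W ∧ V = W ⊔ (Y ⊓ Z)}

/-- The upper conflation `con⁺(Δ, Γ)`. -/
def conUpper (Δ Γ : Set (Subobject X)) : Set (Subobject X) :=
  Δ ∪ {V | ∃ Y ∈ Δ, ∃ Z ∈ Γ, ∃ W, IsSucc Δ Y W ∧ V = Y ⊔ (W ⊓ Z)}

section Order

variable {α : Type*} [PartialOrder α] {Δ : Set α} {Y W : α}

lemma isLeast_gt_of_isLUB_lt (hΔ : IsChain (· ≤ ·) Δ) (hY : Y ∈ Δ)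
    (hW : IsLUB {Z | Z ∈ Δ ∧ Z < Y} W) (hWY : W < Y) : IsLeast {Z | Z ∈ Δ ∧ W < Z} Y := by
  refine ⟨⟨hY, hWY⟩, fun Z ⟨hZ, hWZ⟩ => ?_⟩
  rcases hΔ.total hY hZ with hYZ | hZY
  · exact hYZ
  rcases hZY.lt_or_eq with hZY | rfl
  · exact absurd (hW.1 ⟨hZ, hZY⟩) hWZ.not_ge
  · exact le_rfl

lemma isGreatest_lt_of_isGLB_gt (hΔ : IsChain (· ≤ ·) Δ) (hY : Y ∈ Δ)
    (hW : IsGLB {Z | Z ∈ Δ ∧ Y < Z} W) (hYW : Y < W) : IsGreatest {Z | Z ∈ Δ ∧ Z < W} Y :=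
  isLeast_gt_of_isLUB_lt (α := αᵒᵈ) hΔ.symm hY hW hYW

end Order

section Subobjects

omit [Abelian 𝒜]

variable {Δ S : Set (Subobject X)} {W : Subobject X}

lemma IsColimSub.isLUB (hW : IsColimSub S W) : IsLUB S W := by
  obtain ⟨hub, ⟨hc⟩⟩ := hW
  refine ⟨hub, fun U (hU : ∀ Y ∈ S, Y ≤ U) =>
    Subobject.le_of_comm (hc.desc (chainCocone S U hU)) ?_⟩
  exact hc.hom_ext fun Z => (hc.fac_assoc (chainCocone S U hU) Z U.arrow).trans
    ((Subobject.ofLE_arrow _).trans (Subobject.ofLE_arrow _).symm)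

lemma IsLimSub.isGLB (hS : S.Nonempty) (hW : IsLimSub S W) : IsGLB S W := by
  obtain ⟨hlb, ⟨hc⟩⟩ := hW
  obtain ⟨Z, hZ⟩ := hS
  refine ⟨hlb, fun U (hU : ∀ Y ∈ S, U ≤ Y) =>
    Subobject.le_of_comm (hc.lift (chainCone S U hU)) ?_⟩
  rw [← Subobject.ofLE_arrow (hlb Z hZ)]
  exact (hc.fac_assoc (chainCone S U hU) ⟨Z, hZ⟩ Z.arrow).trans (Subobject.ofLE_arrow _)

lemma Cocomplete.isColimSub_of_isLUB (hΔ : Cocomplete Δ) (hS : S ⊆ Δ) (hW : IsLUB S W) :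
    IsColimSub S W := by
  obtain ⟨V, -, hV⟩ := hΔ S hS
  rwa [hW.unique hV.isLUB]

lemma Complete.isLimSub_of_isGLB (hΔ : Complete Δ) (hS : S ⊆ Δ) (hne : S.Nonempty)
    (hW : IsGLB S W) : IsLimSub S W := by
  obtain ⟨V, -, hV⟩ := hΔ S hS
  rwa [hW.unique (hV.isGLB hne)]

lemma Cocomplete.mem_of_isColimSub (hΔ : Cocomplete Δ) (hS : S ⊆ Δ) (hW : IsColimSub S W) :
    W ∈ Δ := by
  obtain ⟨V, hVΔ, hV⟩ := hΔ S hS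
  rwa [hW.isLUB.unique hV.isLUB]

lemma Complete.mem_of_isLimSub (hΔ : Complete Δ) (hS : S ⊆ Δ) (hne : S.Nonempty)
    (hW : IsLimSub S W) : W ∈ Δ := by
  obtain ⟨V, hVΔ, hV⟩ := hΔ S hS
  rwa [(hW.isGLB hne).unique (hV.isGLB hne)]

end Subobjects

section PredSucc

variable {Δ : Set (Subobject X)} {Y W W' : Subobject X}

lemma IsSubChain.nonempty_gt (hΔ : IsSubChain Δ) (hY : Y ≠ ⊤) :
    {Z | Z ∈ Δ ∧ Y < Z}.Nonempty :=
  ⟨⊤, hΔ.2.2, lt_top_iff_ne_top.mpr hY⟩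

lemma IsPred.le (hp : IsPred Δ Y W) : W ≤ Y := by
  rcases hp with ⟨rfl, rfl⟩ | ⟨-, hcolim⟩
  · exact le_rfl
  · exact hcolim.isLUB.2 fun _ hZ => hZ.2.le

lemma IsSucc.ge (hΔ : IsSubChain Δ) (hs : IsSucc Δ Y W) : Y ≤ W := by
  rcases hs with ⟨rfl, rfl⟩ | ⟨hY, hlim⟩
  · exact le_rfl
  · exact (hlim.isGLB (hΔ.nonempty_gt hY)).2 fun _ hZ => hZ.2.le

lemma IsPred.unique (h : IsPred Δ Y W) (h' : IsPred Δ Y W') : W = W' := by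
  rcases h with ⟨rfl, rfl⟩ | ⟨hY, hcolim⟩ <;> rcases h' with ⟨hY', rfl⟩ | ⟨hY', hcolim'⟩
  · rfl
  · exact absurd rfl hY'
  · exact absurd hY' hY
  · exact hcolim.isLUB.unique hcolim'.isLUB

lemma IsSucc.unique (hΔ : IsSubChain Δ) (h : IsSucc Δ Y W) (h' : IsSucc Δ Y W') : W = W' := by
  rcases h with ⟨rfl, rfl⟩ | ⟨hY, hlim⟩ <;> rcases h' with ⟨hY', rfl⟩ | ⟨hY', hlim'⟩
  · rfl
  · exact absurd rfl hY'
  · exact absurd hY' hY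
  · exact (hlim.isGLB (hΔ.nonempty_gt hY)).unique (hlim'.isGLB (hΔ.nonempty_gt hY))

lemma IsPred.mem (hΔ : IsSubChain Δ) (hcocomp : Cocomplete Δ) (hp : IsPred Δ Y W) : W ∈ Δ := by
  rcases hp with ⟨-, rfl⟩ | ⟨-, hcolim⟩
  · exact hΔ.2.1
  · exact hcocomp.mem_of_isColimSub (fun _ hZ => hZ.1) hcolim

lemma IsSucc.mem (hΔ : IsSubChain Δ) (hcomp : Complete Δ) (hs : IsSucc Δ Y W) : W ∈ Δ := by
  rcases hs with ⟨-, rfl⟩ | ⟨hY, hlim⟩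
  · exact hΔ.2.2
  · exact hcomp.mem_of_isLimSub (fun _ hZ => hZ.1) (hΔ.nonempty_gt hY) hlim

lemma IsPred.isSucc (hΔ : IsSubChain Δ) (hcomp : Complete Δ) (hY : Y ∈ Δ)
    (hp : IsPred Δ Y W) (hne : W ≠ Y) : IsSucc Δ W Y := by
  have hWY : W < Y := hp.le.lt_of_ne hne
  rcases hp with ⟨rfl, rfl⟩ | ⟨-, hcolim⟩
  · exact absurd rfl hne
  have hleast := isLeast_gt_of_isLUB_lt hΔ.1 hY hcolim.isLUB hWY
  exact .inr ⟨hWY.ne_top, hcomp.isLimSub_of_isGLB (fun _ hZ => hZ.1) ⟨Y, hleast.1⟩ hleast.isGLB⟩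

lemma IsSucc.isPred (hΔ : IsSubChain Δ) (hcocomp : Cocomplete Δ) (hY : Y ∈ Δ)
    (hs : IsSucc Δ Y W) (hne : W ≠ Y) : IsPred Δ W Y := by
  have hYW : Y < W := (hs.ge hΔ).lt_of_ne hne.symm
  rcases hs with ⟨rfl, rfl⟩ | ⟨hY', hlim⟩
  · exact absurd rfl hne
  have hgreatest := isGreatest_lt_of_isGLB_gt hΔ.1 hY (hlim.isGLB (hΔ.nonempty_gt hY')) hYW
  exact .inr ⟨hYW.ne_bot, hcocomp.isColimSub_of_isLUB (fun _ hZ => hZ.1) hgreatest.isLUB⟩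

end PredSucc

theorem statement8_general (X : 𝒜) (Δ : Set (Subobject X))
    (hsc : IsSubChain Δ) (hbc : Bicomplete Δ) :
    (∀ Y ∈ Δ, ∀ W, IsPred Δ Y W → W ≠ Y → IsSucc Δ W Y) ∧
    (∀ Y ∈ Δ, ∀ W, IsSucc Δ Y W → W ≠ Y → IsPred Δ W Y) ∧
    ∃ e : lowerIdx Δ ≃ upperIdx Δ,
      ∀ (i : lowerIdx Δ) (W : Subobject X) (hW : W ≤ i.1) (V : Subobject X)
        (hV : (e i).1 ≤ V),
        IsPred Δ i.1 W → IsSucc Δ (e i).1 V →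
        Nonempty (quot W i.1 hW ≅ quot (e i).1 V hV) := by
  refine ⟨fun Y hY W hp hne => hp.isSucc hsc hbc.2 hY hne,
    fun Y hY W hs hne => hs.isPred hsc hbc.1 hY hne, ?_⟩
  let pred (i : lowerIdx Δ) : Subobject X := i.2.2.choose
  have hpred (i : lowerIdx Δ) : IsPred Δ i.1 (pred i) ∧ pred i ≠ i.1 := i.2.2.choose_spec
  let succ (j : upperIdx Δ) : Subobject X := j.2.2.choose
  have hsucc (j : upperIdx Δ) : IsSucc Δ j.1 (succ j) ∧ succ j ≠ j.1 := j.2.2.choose_spec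
  have succ_pred (i : lowerIdx Δ) : IsSucc Δ (pred i) i.1 :=
    (hpred i).1.isSucc hsc hbc.2 i.2.1 (hpred i).2
  have pred_succ (j : upperIdx Δ) : IsPred Δ (succ j) j.1 :=
    (hsucc j).1.isPred hsc hbc.1 j.2.1 (hsucc j).2
  let e : lowerIdx Δ ≃ upperIdx Δ :=
    { toFun i := ⟨pred i, (hpred i).1.mem hsc hbc.1, i.1, succ_pred i, (hpred i).2.symm⟩
      invFun j := ⟨succ j, (hsucc j).1.mem hsc hbc.2, j.1, pred_succ j, (hsucc j).2.symm⟩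
      left_inv i := Subtype.ext <| (hsucc _).1.unique hsc (succ_pred i)
      right_inv j := Subtype.ext <| (hpred _).1.unique (pred_succ j) }
  refine ⟨e, fun i W hW V hV hW' hV' => ?_⟩
  obtain rfl : W = pred i := hW'.unique (hpred i).1
  obtain rfl : V = i.1 := hV'.unique hsc (succ_pred i)
  exact ⟨Iso.refl _⟩

/-- Proposition 3.9: in a bicomplete subobject chain, predecessors and successors are
inverse to one another, and the lower and upper subfactor multisets coincide. -/
theorem statement8 [EssentiallySmall.{w} 𝒜] (X : 𝒜) (Δ : Set (Subobject X))
    (hsc : IsSubChain Δ) (hbc : Bicomplete Δ) :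
    (∀ Y ∈ Δ, ∀ W, IsPred Δ Y W → W ≠ Y → IsSucc Δ W Y) ∧
    (∀ Y ∈ Δ, ∀ W, IsSucc Δ Y W → W ≠ Y → IsPred Δ W Y) ∧
    ∃ e : lowerIdx Δ ≃ upperIdx Δ,
      ∀ (i : lowerIdx Δ) (W : Subobject X) (hW : W ≤ i.1) (V : Subobject X)
        (hV : (e i).1 ≤ V),
        IsPred Δ i.1 W → IsSucc Δ (e i).1 V →
        Nonempty (quot W i.1 hW ≅ quot (e i).1 V hV) :=
  statement8_general X Δ hsc hbc

end JHS
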